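/- arXiv:1508.03932 — 5 statements merged into one kernel-verified Lean document; each statement's English description precedes it below -/
import Mathlib

section
/- Let α > 0 and let X = {(λ, m_λ)}_{λ∈Λ} be a divisor such that for every C > 0 there exists a compact subset K of ℂ with ⋃_{λ∈Λ, m_λ > αC²} D(λ, √(m_λ/α) − C) = ℂ \ K. Then there exists a subset Λ' of Λ such that: (i) for every C > 0 there is a compact subset K of ℂ with ⋃_{λ∈Λ', m_λ > αC²} D(λ, √(m_λ/α) − C) = ℂ \ K, and (ii) m_λ → +∞ as |λ| → ∞ along λ ∈ Λ'. -/
open Metric Set Filter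

/-!
Call `D(λ, √(m_λ/α) − C)` with `m_λ > αC²` a disc of level `C`. Choose radii
`R 0 ≤ R 1 ≤ ⋯ → ∞` such that every `z` with `‖z‖ > R j` lies in a disc of level `j + 1`, and
keep only the centres `λ` whose disc of level `j + 1` is used for some `z` in the shell
`R j < ‖z‖ ≤ R (j + 1)`. Every far point lies in a shell of high level, so the kept centres still
cover at every level. A kept centre with `m_λ < n` has level `j + 1 < n / α`, so it lies within
`√(n / α)` of a shell of bounded level, which bounds `‖λ‖`.
-/

theorem Monotone.exists_lt_le_succ_of_tendsto {β : Type*} [LinearOrder β] {R : ℕ → β}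
    (hR : Monotone R) (hRt : Tendsto R atTop atTop) {N : ℕ} {r : β} (hr : R N < r) :
    ∃ j, N ≤ j ∧ R j < r ∧ r ≤ R (j + 1) := by
  classical
  have hex : ∃ k, r ≤ R k := (hRt.eventually_ge_atTop r).exists
  have hNk : N < Nat.find hex := by
    by_contra! hkN
    exact (Nat.find_spec hex).not_gt ((hR hkN).trans_lt hr)
  refine ⟨Nat.find hex - 1, by omega, not_le.1 (Nat.find_min hex (by omega)), ?_⟩
  rw [Nat.sub_add_cancel (by omega)]
  exact Nat.find_spec hex

theorem exists_monotone_tendsto_atTop_ge (r : ℕ → ℝ) :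
    ∃ R : ℕ → ℝ, Monotone R ∧ Tendsto R atTop atTop ∧ ∀ j, r j ≤ R j := by
  refine ⟨fun j => partialSups r j + j, (partialSups_monotone r).add Nat.mono_cast,
    tendsto_atTop_add_left_of_le _ (r 0) (fun j => le_partialSups_of_le r (Nat.zero_le j))
      tendsto_natCast_atTop_atTop,
    fun j => le_add_of_le_of_nonneg (le_partialSups r j) j.cast_nonneg⟩

theorem IsOpen.exists_isCompact_eq_compl_iff {X : Type*} [TopologicalSpace X] {U : Set X}
    (hU : IsOpen U) : (∃ K, IsCompact K ∧ U = Kᶜ) ↔ U ∈ cocompact X := by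
  refine ⟨fun ⟨K, hK, hUK⟩ => mem_cocompact.2 ⟨K, hK, hUK.ge⟩, fun h => ?_⟩
  obtain ⟨t, ht, hUt⟩ := mem_cocompact'.1 h
  exact ⟨Uᶜ, ht.of_isClosed_subset hU.isClosed_compl hUt, (compl_compl U).symm⟩

def discUnion (α : ℝ) (m : ℂ → ℕ) (S : Set ℂ) (C : ℝ) : Set ℂ :=
  ⋃ lam ∈ {l ∈ S | α * C ^ 2 < (m l : ℝ)}, ball lam (Real.sqrt ((m lam : ℝ) / α) - C)

section discUnion

variable {α : ℝ} {m : ℂ → ℕ}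

theorem isOpen_discUnion (S : Set ℂ) (C : ℝ) : IsOpen (discUnion α m S C) :=
  isOpen_biUnion fun _ _ => isOpen_ball

theorem mem_discUnion {S : Set ℂ} {C : ℝ} {z : ℂ} :
    z ∈ discUnion α m S C ↔
      ∃ lam ∈ S, α * C ^ 2 < m lam ∧ z ∈ ball lam (Real.sqrt ((m lam : ℝ) / α) - C) := by
  simp only [discUnion, mem_iUnion, mem_sep_iff, exists_prop, and_assoc]

theorem discUnion_anti (hα : 0 ≤ α) (S : Set ℂ) {C D : ℝ} (hC : 0 ≤ C) (hCD : C ≤ D) :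
    discUnion α m S D ⊆ discUnion α m S C := by
  intro z hz
  obtain ⟨lam, hlam, hmD, hzD⟩ := mem_discUnion.1 hz
  refine mem_discUnion.2 ⟨lam, hlam, ?_, ball_subset_ball (by linarith) hzD⟩
  have : C ^ 2 ≤ D ^ 2 := pow_le_pow_left₀ hC hCD 2
  nlinarith

def shellCenters (α : ℝ) (m : ℂ → ℕ) (Λ : Set ℂ) (R : ℕ → ℝ) : Set ℂ :=
  {lam ∈ Λ | ∃ j : ℕ, α * ((j : ℝ) + 1) ^ 2 < m lam ∧
    ∃ z ∈ ball lam (Real.sqrt ((m lam : ℝ) / α) - ((j : ℝ) + 1)), R j < ‖z‖ ∧ ‖z‖ ≤ R (j + 1)}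

variable {Λ : Set ℂ} {R : ℕ → ℝ}

theorem closedBall_compl_subset_discUnion_shellCenters (hR : Monotone R)
    (hRt : Tendsto R atTop atTop) (hα : 0 ≤ α)
    (hcov : ∀ j : ℕ, (closedBall 0 (R j))ᶜ ⊆ discUnion α m Λ ((j : ℝ) + 1)) (N : ℕ) :
    (closedBall 0 (R N))ᶜ ⊆ discUnion α m (shellCenters α m Λ R) ((N : ℝ) + 1) := by
  intro z hz
  rw [mem_compl_iff, mem_closedBall, dist_zero_right, not_le] at hz
  obtain ⟨j, hNj, hjz, hzj⟩ := hR.exists_lt_le_succ_of_tendsto hRt hz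
  have hzj' : z ∈ (closedBall 0 (R j))ᶜ := by simpa using hjz
  obtain ⟨lam, hlam, hm, hzlam⟩ := mem_discUnion.1 (hcov j hzj')
  have hzj1 : z ∈ discUnion α m (shellCenters α m Λ R) ((j : ℝ) + 1) :=
    mem_discUnion.2 ⟨lam, ⟨hlam, j, hm, z, hzlam, hjz, hzj⟩, hm, hzlam⟩
  have hNj' : (N : ℝ) + 1 ≤ j + 1 := by gcongr
  exact discUnion_anti hα _ (by positivity) hNj' hzj1

theorem norm_lt_of_mem_shellCenters (hα : 0 < α) (hR : Monotone R) {lam : ℂ}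
    (hlam : lam ∈ shellCenters α m Λ R) {n : ℕ} (hmn : m lam < n) :
    ‖lam‖ < R ⌈n / α⌉₊ + Real.sqrt (n / α) := by
  obtain ⟨-, j, hm, z, hz, -, hzj⟩ := hlam
  have hmn' : (m lam : ℝ) < n := by exact_mod_cast hmn
  have hj : (j : ℝ) + 1 ≤ n / α := by
    rw [le_div_iff₀ hα]
    nlinarith [j.cast_nonneg (α := ℝ)]
  have hRj : R (j + 1) ≤ R ⌈n / α⌉₊ := hR (by exact_mod_cast hj.trans (Nat.le_ceil _))
  have hsqrt : Real.sqrt ((m lam : ℝ) / α) ≤ Real.sqrt (n / α) :=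
    Real.sqrt_le_sqrt (div_le_div_of_nonneg_right hmn'.le hα.le)
  rw [mem_ball, dist_comm] at hz
  calc ‖lam‖ ≤ ‖z‖ + dist lam z := by simpa [dist_eq_norm] using norm_le_insert' lam z
    _ < R ⌈n / α⌉₊ + Real.sqrt (n / α) := by linarith [j.cast_nonneg (α := ℝ)]

end discUnion

theorem stmt2_general (α : ℝ) (hα : 0 < α) (Λ : Set ℂ) (m : ℂ → ℕ)
    (hcov : ∀ C : ℝ, 0 < C → ∃ K : Set ℂ, IsCompact K ∧
      (⋃ lam ∈ {l ∈ Λ | α * C ^ 2 < (m l : ℝ)},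
        ball lam (Real.sqrt ((m lam : ℝ) / α) - C)) = Kᶜ) :
    ∃ Λ' ⊆ Λ,
      (∀ C : ℝ, 0 < C → ∃ K : Set ℂ, IsCompact K ∧
        (⋃ lam ∈ {l ∈ Λ' | α * C ^ 2 < (m l : ℝ)},
          ball lam (Real.sqrt ((m lam : ℝ) / α) - C)) = Kᶜ) ∧
      (∀ n : ℕ, ∃ R : ℝ, ∀ lam ∈ Λ', R ≤ ‖lam‖ → n ≤ m lam) := by
  have hcoc (j : ℕ) : ∃ r, (closedBall 0 r)ᶜ ⊆ discUnion α m Λ ((j : ℝ) + 1) :=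
    (mem_cocompact_iff_closedBall_compl_subset 0).1 <|
      (isOpen_discUnion Λ _).exists_isCompact_eq_compl_iff.1 (hcov _ (by positivity))
  choose r hr using hcoc
  obtain ⟨R, hR, hRt, hrR⟩ := exists_monotone_tendsto_atTop_ge r
  have hcovR (j : ℕ) : (closedBall 0 (R j))ᶜ ⊆ discUnion α m Λ ((j : ℝ) + 1) :=
    (compl_subset_compl.2 (closedBall_subset_closedBall (hrR j))).trans (hr j)
  refine ⟨shellCenters α m Λ R, sep_subset _ _, fun C hC => ?_, fun n => ?_⟩
  · refine (isOpen_discUnion _ C).exists_isCompact_eq_compl_iff.2 <|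
      (mem_cocompact_iff_closedBall_compl_subset 0).2 ⟨R ⌈C⌉₊, ?_⟩
    have hC' : C ≤ (⌈C⌉₊ : ℝ) + 1 := (Nat.le_ceil C).trans (le_add_of_nonneg_right zero_le_one)
    exact (closedBall_compl_subset_discUnion_shellCenters hR hRt hα.le hcovR _).trans
      (discUnion_anti hα.le _ hC.le hC')
  · refine ⟨R ⌈n / α⌉₊ + Real.sqrt (n / α), fun lam hlam hRlam => ?_⟩
    by_contra! hmn
    exact hRlam.not_gt (norm_lt_of_mem_shellCenters hα hR hlam hmn)

/-- If a divisor `X = (Λ, m)` is such that for every `C > 0` the discs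
`D(λ, √(m_λ/α) − C)` over `λ ∈ Λ` with `m_λ > αC²` cover the complement of some compact
set, then there is a subset `Λ' ⊆ Λ` with the same covering property and such that
`m_λ → ∞` as `|λ| → ∞` along `Λ'`. -/
theorem stmt2 (α : ℝ) (hα : 0 < α) (Λ : Set ℂ) (m : ℂ → ℕ)
    (hΛ : Λ.Countable) (hm : ∀ lam ∈ Λ, 1 ≤ m lam)
    (hcov : ∀ C : ℝ, 0 < C → ∃ K : Set ℂ, IsCompact K ∧
      (⋃ lam ∈ {l ∈ Λ | α * C ^ 2 < (m l : ℝ)},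
        ball lam (Real.sqrt ((m lam : ℝ) / α) - C)) = Kᶜ) :
    ∃ Λ' ⊆ Λ,
      (∀ C : ℝ, 0 < C → ∃ K : Set ℂ, IsCompact K ∧
        (⋃ lam ∈ {l ∈ Λ' | α * C ^ 2 < (m l : ℝ)},
          ball lam (Real.sqrt ((m lam : ℝ) / α) - C)) = Kᶜ) ∧
      (∀ n : ℕ, ∃ R : ℝ, ∀ lam ∈ Λ', R ≤ ‖lam‖ → n ≤ m lam) :=
  stmt2_general α hα Λ m hcov
end

section
/- Let α > 0 and let X = {(λ, m_λ)}_{λ∈Λ} be a divisor. If X is a sampling divisor for F^∞_α, then there exists C > 0 such that ⋃_{λ∈Λ} D(λ, √(m_λ/α) + C) = ℂ. -/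
/-!
Test the sampling inequality on the normalized reproducing kernel `k_a` at a point `a` outside
all the discs. Its norm is `1`. At each `λ`, factor `k_a = γ k_λ e^{c (z - λ)}` with
`|γ| = e^{-α|a - λ|²/2}` and `|c| = α|a - λ|`; replacing `e^{c (z - λ)}` by its Taylor polynomial
of degree `m_λ - 1` changes `k_a` by an element of `N^∞_λ`, and a Poisson-tail estimate bounds the
weighted norm of what is left by `e^{-(√α|a - λ| - √m_λ)²/2} ≤ e^{-αC²/2}`. For `C` large this
makes every quotient norm smaller than `1/L`, contradicting sampling.
-/

open MeasureTheory Metric Set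
open scoped ENNReal NNReal

noncomputable section

/-- Membership in the Fock space `F^∞_α`: entire functions with
`sup_z |f(z)| e^{−(α/2)|z|²} < ∞`. -/
def MemFInf (α : ℝ) (f : ℂ → ℂ) : Prop :=
  Differentiable ℂ f ∧
    ∃ C : ℝ, ∀ z : ℂ, ‖f z‖ * Real.exp (-(α / 2) * ‖z‖ ^ 2) ≤ C

/-- The norm in `F^∞_α`. -/
def FInfNorm (α : ℝ) (f : ℂ → ℂ) : ℝ :=
  ⨆ z : ℂ, ‖f z‖ * Real.exp (-(α / 2) * ‖z‖ ^ 2)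

/-- Membership in `N^∞_{λ,n}`: the functions of `F^∞_α` vanishing at `λ` to order `n`. -/
def MemNInf (α : ℝ) (lam : ℂ) (n : ℕ) (f : ℂ → ℂ) : Prop :=
  MemFInf α f ∧ ∀ k < n, iteratedDeriv k f lam = 0

/-- The quotient norm `‖f‖_{F^∞_α / N^∞_{λ,n}} = inf {‖f − g‖ : g ∈ N^∞_{λ,n}}`. -/
def quotInf (α : ℝ) (lam : ℂ) (n : ℕ) (f : ℂ → ℂ) : ℝ :=
  sInf {c : ℝ | ∃ g : ℂ → ℂ, MemNInf α lam n g ∧ FInfNorm α (fun z => f z - g z) = c}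

/-- `X = (Λ, m)` is a sampling divisor for `F^∞_α`. -/
def SamplingFInf (α : ℝ) (Λ : Set ℂ) (m : ℂ → ℕ) : Prop :=
  ∃ L : ℝ, 0 < L ∧ ∀ f : ℂ → ℂ, MemFInf α f →
    FInfNorm α f ≤ L * ⨆ lam : Λ, quotInf α (lam : ℂ) (m (lam : ℂ)) f

/-- `X = (Λ, m)` is an interpolating divisor for `F^∞_α`: for every family
`(f_λ)` with uniformly bounded quotient norms there is `f ∈ F^∞_α` with
`f − f_λ ∈ N^∞_λ` for all `λ ∈ Λ`. -/
def InterpolatingFInf (α : ℝ) (Λ : Set ℂ) (m : ℂ → ℕ) : Prop :=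
  ∀ F : ℂ → ℂ → ℂ, (∀ lam ∈ Λ, MemFInf α (F lam)) →
    (∃ B : ℝ, ∀ lam ∈ Λ, quotInf α lam (m lam) (F lam) ≤ B) →
    ∃ f : ℂ → ℂ, MemFInf α f ∧
      ∀ lam ∈ Λ, MemNInf α lam (m lam) (fun z => f z - F lam z)

open ComplexConjugate

theorem sum_pow_div_factorial_le_pow_mul_exp (m : ℕ) {x w : ℝ} (hx : 0 ≤ x) (hw : 1 ≤ w) :
    ∑ k ∈ Finset.range m, x ^ k / k.factorial ≤ w ^ m * Real.exp (x / w) := by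
  have hw0 : 0 < w := zero_lt_one.trans_le hw
  calc ∑ k ∈ Finset.range m, x ^ k / k.factorial
      = ∑ k ∈ Finset.range m, w ^ k * ((x / w) ^ k / k.factorial) := by
        refine Finset.sum_congr rfl fun k _ => ?_
        rw [div_pow, mul_div_assoc', mul_div_cancel₀ _ (pow_ne_zero k hw0.ne')]
    _ ≤ ∑ k ∈ Finset.range m, w ^ m * ((x / w) ^ k / k.factorial) := by
        gcongr with k hk
        exact (Finset.mem_range.mp hk).le
    _ ≤ w ^ m * Real.exp (x / w) := by
        rw [← Finset.mul_sum]
        gcongr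
        exact Real.sum_le_exp_of_nonneg (by positivity) m

theorem pow_le_exp_mul_sub_one (m : ℕ) {w : ℝ} (hw : 0 ≤ w) :
    w ^ m ≤ Real.exp (m * (w - 1)) := by
  rw [Real.exp_nat_mul]
  gcongr
  linarith [Real.add_one_le_exp (w - 1)]

theorem sum_pow_div_factorial_mul_exp_le (m : ℕ) {s ρ : ℝ} (hρ : 0 ≤ ρ)
    (hs : √m ≤ s) :
    (∑ k ∈ Finset.range m, (s * ρ) ^ k / k.factorial) * Real.exp (-(s ^ 2 + ρ ^ 2) / 2) ≤
      Real.exp (-(s - √m) ^ 2 / 2) := by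
  rcases m.eq_zero_or_pos with rfl | hm
  · simp only [Finset.range_zero, Finset.sum_empty, zero_mul]; positivity
  set t := √(m : ℝ)
  have ht : 0 < t := Real.sqrt_pos.mpr (by exact_mod_cast hm)
  have ht2 : t ^ 2 = m := Real.sq_sqrt (Nat.cast_nonneg m)
  have hs0 : 0 < s := ht.trans_le hs
  have hw : 1 ≤ s / t := (one_le_div ht).mpr hs
  -- `w = s / √m` is the optimal choice in `sum_pow_div_factorial_le_pow_mul_exp`.
  have hsum := sum_pow_div_factorial_le_pow_mul_exp m (x := s * ρ) (mul_nonneg hs0.le hρ) hw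
  have hpow := pow_le_exp_mul_sub_one m (w := s / t) (zero_le_one.trans hw)
  have hxw : s * ρ / (s / t) = t * ρ := by field_simp
  have hmw : (m : ℝ) * (s / t - 1) = t * s - m := by rw [← ht2]; field_simp
  rw [hxw] at hsum
  rw [hmw] at hpow
  calc (∑ k ∈ Finset.range m, (s * ρ) ^ k / k.factorial) * Real.exp (-(s ^ 2 + ρ ^ 2) / 2)
      ≤ Real.exp (t * s - m) * Real.exp (t * ρ) * Real.exp (-(s ^ 2 + ρ ^ 2) / 2) := by
        gcongr
        exact hsum.trans (mul_le_mul_of_nonneg_right hpow (by positivity))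
    _ = Real.exp (-(s - t) ^ 2 / 2 - (ρ - t) ^ 2 / 2) := by
        rw [← Real.exp_add, ← Real.exp_add, ← ht2]; ring_nf
    _ ≤ Real.exp (-(s - t) ^ 2 / 2) := by
        gcongr; nlinarith [sq_nonneg (ρ - t)]

theorem iteratedDeriv_mul_eq_zero_of_forall_le {𝕜 𝔸 : Type*} [NontriviallyNormedField 𝕜]
    [NormedRing 𝔸] [NormedAlgebra 𝕜 𝔸] {f g : 𝕜 → 𝔸} {x : 𝕜} {n : ℕ}
    (hf : ContDiffAt 𝕜 n f x) (hg : ContDiffAt 𝕜 n g x)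
    (hg0 : ∀ k ≤ n, iteratedDeriv k g x = 0) :
    iteratedDeriv n (fun y => f y * g y) x = 0 := by
  rw [iteratedDeriv_fun_mul hf hg]
  exact Finset.sum_eq_zero fun i _ => by rw [hg0 _ (Nat.sub_le n i), mul_zero]

def expTaylor (c : ℂ) (m : ℕ) (w : ℂ) : ℂ :=
  ∑ i ∈ Finset.range m, c ^ i / i.factorial * w ^ i

@[fun_prop]
theorem differentiable_expTaylor (c : ℂ) (m : ℕ) : Differentiable ℂ (expTaylor c m) := by
  unfold expTaylor; fun_prop

theorem iteratedDeriv_expTaylor_zero (c : ℂ) {m k : ℕ} (hk : k < m) :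
    iteratedDeriv k (expTaylor c m) 0 = c ^ k := by
  unfold expTaylor
  rw [iteratedDeriv_fun_sum fun i _ => by fun_prop]
  simp only [iteratedDeriv_const_mul_field, iteratedDeriv_fun_pow_zero, Nat.cast_ite,
    Nat.cast_zero, mul_ite, mul_zero]
  rw [Finset.sum_ite_eq, if_pos (Finset.mem_range.mpr hk),
    div_mul_cancel₀ _ (by exact_mod_cast k.factorial_ne_zero)]

theorem iteratedDeriv_cexp_mul_sub_expTaylor_zero (c : ℂ) {m k : ℕ} (hk : k < m) :
    iteratedDeriv k (fun w => Complex.exp (c * w) - expTaylor c m w) 0 = 0 := by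
  have hexp : ContDiffAt ℂ k (fun w => Complex.exp (c * w)) 0 :=
    (contDiffAt_const.mul contDiffAt_id).cexp
  have hpoly : ContDiffAt ℂ k (expTaylor c m) 0 :=
    (differentiable_expTaylor c m).contDiff.contDiffAt
  rw [iteratedDeriv_fun_sub hexp hpoly, iteratedDeriv_cexp_const_mul,
    iteratedDeriv_expTaylor_zero c hk]
  simp

theorem norm_expTaylor_le (c : ℂ) (m : ℕ) (w : ℂ) :
    ‖expTaylor c m w‖ ≤ ∑ i ∈ Finset.range m, (‖c‖ * ‖w‖) ^ i / i.factorial := by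
  refine (norm_sum_le _ _).trans (Finset.sum_le_sum fun i _ => ?_)
  rw [norm_mul, norm_div, norm_pow, norm_pow, Complex.norm_natCast, mul_pow, div_mul_eq_mul_div]

theorem MemFInf.sub {α : ℝ} {f g : ℂ → ℂ} (hf : MemFInf α f) (hg : MemFInf α g) :
    MemFInf α (fun z => f z - g z) := by
  obtain ⟨hfd, Cf, hCf⟩ := hf
  obtain ⟨hgd, Cg, hCg⟩ := hg
  refine ⟨hfd.sub hgd, Cf + Cg, fun z => ?_⟩
  calc ‖f z - g z‖ * Real.exp (-(α / 2) * ‖z‖ ^ 2)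
      ≤ (‖f z‖ + ‖g z‖) * Real.exp (-(α / 2) * ‖z‖ ^ 2) := by gcongr; exact norm_sub_le _ _
    _ ≤ Cf + Cg := by rw [add_mul]; exact add_le_add (hCf z) (hCg z)

theorem le_FInfNorm {α : ℝ} {f : ℂ → ℂ} (hf : MemFInf α f) (z : ℂ) :
    ‖f z‖ * Real.exp (-(α / 2) * ‖z‖ ^ 2) ≤ FInfNorm α f := by
  obtain ⟨C, hC⟩ := hf.2
  exact le_ciSup (f := fun z => ‖f z‖ * Real.exp (-(α / 2) * ‖z‖ ^ 2))
    ⟨C, forall_mem_range.mpr hC⟩ z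

theorem FInfNorm_nonneg (α : ℝ) (f : ℂ → ℂ) : 0 ≤ FInfNorm α f :=
  Real.iSup_nonneg fun _ => by positivity

theorem quotInf_le_FInfNorm {α : ℝ} {lam : ℂ} {n : ℕ} {f h : ℂ → ℂ}
    (hfh : MemNInf α lam n (fun z => f z - h z)) : quotInf α lam n f ≤ FInfNorm α h := by
  refine csInf_le ⟨0, ?_⟩ ⟨_, hfh, by simp only [sub_sub_cancel]⟩
  rintro _ ⟨g, -, rfl⟩
  exact FInfNorm_nonneg _ _

/-- The normalized reproducing kernel of `F^∞_α` at `a`. -/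
def fockKernel (α : ℝ) (a z : ℂ) : ℂ :=
  Complex.exp (α * conj a * z - ((α * ‖a‖ ^ 2 / 2 : ℝ) : ℂ))

@[fun_prop]
theorem differentiable_fockKernel (α : ℝ) (a : ℂ) : Differentiable ℂ (fockKernel α a) := by
  unfold fockKernel; fun_prop

theorem norm_fockKernel_mul_exp (α : ℝ) (a z : ℂ) :
    ‖fockKernel α a z‖ * Real.exp (-(α / 2) * ‖z‖ ^ 2) = Real.exp (-(α / 2) * ‖z - a‖ ^ 2) := by
  rw [fockKernel, Complex.norm_exp, ← Real.exp_add]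
  congr 1
  simp only [Complex.sub_re, Complex.mul_re, Complex.ofReal_re, Complex.ofReal_im,
    Complex.conj_re, Complex.conj_im, Complex.mul_im, Complex.sq_norm, Complex.normSq_apply,
    Complex.sub_im]
  ring

theorem memFInf_fockKernel {α : ℝ} (hα : 0 ≤ α) (a : ℂ) : MemFInf α (fockKernel α a) := by
  refine ⟨differentiable_fockKernel α a, 1, fun z => ?_⟩
  rw [norm_fockKernel_mul_exp, Real.exp_le_one_iff]
  have := sq_nonneg ‖z - a‖
  nlinarith

theorem one_le_FInfNorm_fockKernel {α : ℝ} (hα : 0 ≤ α) (a : ℂ) :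
    1 ≤ FInfNorm α (fockKernel α a) := by
  have h := le_FInfNorm (memFInf_fockKernel hα a) a
  rwa [norm_fockKernel_mul_exp, sub_self, norm_zero, zero_pow two_ne_zero, mul_zero,
    Real.exp_zero] at h

theorem fockKernel_eq_mul (α : ℝ) (a lam z : ℂ) :
    fockKernel α a z = fockKernel α a lam * Real.exp (-(α / 2) * ‖lam‖ ^ 2) *
      fockKernel α lam z * Complex.exp (α * conj (a - lam) * (z - lam)) := by
  simp only [fockKernel, Complex.ofReal_exp, ← Complex.exp_add]
  congr 1
  push_cast
  rw [← Complex.mul_conj' lam, map_sub]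
  ring

theorem quotInf_fockKernel_le {α : ℝ} (hα : 0 ≤ α) (a lam : ℂ) (m : ℕ)
    (hm : √m ≤ √α * ‖a - lam‖) :
    quotInf α lam m (fockKernel α a) ≤ Real.exp (-(√α * ‖a - lam‖ - √m) ^ 2 / 2) := by
  set γ : ℂ := fockKernel α a lam * Real.exp (-(α / 2) * ‖lam‖ ^ 2)
  set c : ℂ := α * conj (a - lam)
  -- `h` replaces the last factor of `fockKernel_eq_mul` by its Taylor polynomial at `lam`.
  set h : ℂ → ℂ := fun z => γ * fockKernel α lam z * expTaylor c m (z - lam)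
  have hγ : ‖γ‖ = Real.exp (-(α / 2) * ‖a - lam‖ ^ 2) := by
    rw [norm_mul, Complex.norm_real, Real.norm_of_nonneg (Real.exp_nonneg _),
      norm_fockKernel_mul_exp, norm_sub_rev]
  have hbound : ∀ z, ‖h z‖ * Real.exp (-(α / 2) * ‖z‖ ^ 2) ≤
      Real.exp (-(√α * ‖a - lam‖ - √m) ^ 2 / 2) := by
    intro z
    have hc : ‖c‖ * ‖z - lam‖ = (√α * ‖a - lam‖) * (√α * ‖z - lam‖) := by
      rw [Complex.norm_mul, Complex.norm_real, Complex.norm_conj, Real.norm_of_nonneg hα,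
        mul_mul_mul_comm, Real.mul_self_sqrt hα, mul_assoc]
    calc ‖h z‖ * Real.exp (-(α / 2) * ‖z‖ ^ 2)
        = ‖γ‖ * (‖fockKernel α lam z‖ * Real.exp (-(α / 2) * ‖z‖ ^ 2)) *
            ‖expTaylor c m (z - lam)‖ := by
          simp only [h, norm_mul]; ring
      _ = Real.exp (-((√α * ‖a - lam‖) ^ 2 + (√α * ‖z - lam‖) ^ 2) / 2) *
            ‖expTaylor c m (z - lam)‖ := by
          rw [hγ, norm_fockKernel_mul_exp, ← Real.exp_add, mul_pow, mul_pow, Real.sq_sqrt hα]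
          ring_nf
      _ ≤ Real.exp (-((√α * ‖a - lam‖) ^ 2 + (√α * ‖z - lam‖) ^ 2) / 2) *
            ∑ k ∈ Finset.range m, ((√α * ‖a - lam‖) * (√α * ‖z - lam‖)) ^ k / k.factorial := by
          rw [← hc]; gcongr; exact norm_expTaylor_le c m (z - lam)
      _ ≤ Real.exp (-(√α * ‖a - lam‖ - √m) ^ 2 / 2) := by
          rw [mul_comm]; exact sum_pow_div_factorial_mul_exp_le m (by positivity) hm
  have hjet : ∀ k < m, iteratedDeriv k (fun z => fockKernel α a z - h z) lam = 0 := by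
    intro k hk
    have hfac : (fun z => fockKernel α a z - h z) = fun z => γ * fockKernel α lam z *
        (Complex.exp (c * (z - lam)) - expTaylor c m (z - lam)) := by
      funext z; rw [fockKernel_eq_mul α a lam z]; ring
    rw [hfac]
    refine iteratedDeriv_mul_eq_zero_of_forall_le
      (by fun_prop : Differentiable ℂ _).contDiff.contDiffAt
      (by fun_prop : Differentiable ℂ _).contDiff.contDiffAt fun j hj => ?_
    simp only [iteratedDeriv_comp_sub_const j (fun w => Complex.exp (c * w) - expTaylor c m w),
      sub_self]
    exact iteratedDeriv_cexp_mul_sub_expTaylor_zero c (hj.trans_lt hk)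
  refine (quotInf_le_FInfNorm (h := h) ⟨?_, hjet⟩).trans (ciSup_le hbound)
  exact (memFInf_fockKernel hα a).sub ⟨by fun_prop, _, hbound⟩

theorem quotInf_fockKernel_le_of_add_le {α C : ℝ} (hα : 0 < α) (hC : 0 ≤ C) {a lam : ℂ} {m : ℕ}
    (hfar : √(m / α) + C ≤ ‖a - lam‖) :
    quotInf α lam m (fockKernel α a) ≤ Real.exp (-(α * C ^ 2) / 2) := by
  have hsqrt : √m = √α * √(m / α) := by
    rw [← Real.sqrt_mul hα.le, mul_div_cancel₀ _ hα.ne']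
  have hgap : √α * C ≤ √α * ‖a - lam‖ - √m := by
    rw [hsqrt]; nlinarith [Real.sqrt_nonneg α]
  refine (quotInf_fockKernel_le hα.le a lam m (by nlinarith [Real.sqrt_nonneg α])).trans ?_
  gcongr
  calc α * C ^ 2 = (√α * C) ^ 2 := by rw [mul_pow, Real.sq_sqrt hα.le]
    _ ≤ (√α * ‖a - lam‖ - √m) ^ 2 := by gcongr

theorem stmt6_general (α : ℝ) (hα : 0 < α) (Λ : Set ℂ) (m : ℂ → ℕ)
    (hsamp : SamplingFInf α Λ m) :
    ∃ C : ℝ, 0 < C ∧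
      (⋃ lam ∈ Λ, ball lam (Real.sqrt ((m lam : ℝ) / α) + C)) = Set.univ := by
  obtain ⟨L, hL, hS⟩ := hsamp
  set C := √(2 * Real.log (L + 1) / α)
  have hlog : 0 < Real.log (L + 1) := Real.log_pos (by linarith)
  have hC : 0 < C := Real.sqrt_pos.mpr (by positivity)
  have hexp : Real.exp (-(α * C ^ 2) / 2) = (L + 1)⁻¹ := by
    rw [Real.sq_sqrt (by positivity), mul_div_cancel₀ _ hα.ne',
      show -(2 * Real.log (L + 1)) / 2 = -Real.log (L + 1) by ring, Real.exp_neg,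
      Real.exp_log (by linarith)]
  refine ⟨C, hC, eq_univ_of_forall fun a => ?_⟩
  by_contra ha
  simp only [mem_iUnion, mem_ball, Complex.dist_eq, not_exists, not_lt] at ha
  have hquot (lam : Λ) : quotInf α lam (m lam) (fockKernel α a) ≤ (L + 1)⁻¹ :=
    hexp ▸ quotInf_fockKernel_le_of_add_le hα hC.le (ha lam lam.2)
  refine lt_irrefl (1 : ℝ) ?_
  calc
    1 ≤ FInfNorm α (fockKernel α a) := one_le_FInfNorm_fockKernel hα.le a
    _ ≤ L * ⨆ lam : Λ, quotInf α lam (m lam) (fockKernel α a) :=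
      hS _ (memFInf_fockKernel hα.le a)
    _ ≤ L * (L + 1)⁻¹ := by gcongr; exact Real.iSup_le hquot (by positivity)
    _ < 1 := by rw [← div_eq_mul_inv, div_lt_one (by linarith)]; linarith

/-- If `X` is a sampling divisor for `F^∞_α`, then there exists `C > 0` such that
the discs `D(λ, √(m_λ/α) + C)` cover `ℂ`. -/
theorem stmt6 (α : ℝ) (hα : 0 < α) (Λ : Set ℂ) (m : ℂ → ℕ)
    (hΛ : Λ.Countable) (hm : ∀ lam ∈ Λ, 1 ≤ m lam)
    (hsamp : SamplingFInf α Λ m) :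
    ∃ C : ℝ, 0 < C ∧
      (⋃ lam ∈ Λ, ball lam (Real.sqrt ((m lam : ℝ) / α) + C)) = Set.univ :=
  stmt6_general α hα Λ m hsamp

end
end

section
/- There exists an absolute constant c > 0 with the following property: if three discs D₁ = D(Z₁, r₁), D₂ = D(Z₂, r₂), D₃ = D(Z₃, r₃) in ℂ satisfy D₁ ∩ D₂ ∩ D₃ ≠ ∅, then there exist indices 1 ≤ i, j ≤ 3 with i ≠ j such that both (a) r_i + r_j − |Z_i − Z_j| ≥ c · min(r_i, r_j), and (b) m(D_i ∩ D_j) ≥ c · min(r_i, r_j)², where m(A) denotes the Lebesgue area of A. -/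
/-!
Let `x` be a common point and `uᵢ = Zᵢ - x`. If some `‖uᵢ‖ ≤ rᵢ / 2`, disc `i` overlaps any
other disc by more than `rᵢ / 2`. Otherwise use that two of any three vectors make an angle of at
most `2π/3`: three unit vectors cannot have all pairwise inner products below `-1/2`, as the squared
norm of their sum is nonnegative. For such a pair the law of cosines gives
`‖Zᵢ - Zⱼ‖² ≤ ‖uᵢ‖² + ‖uⱼ‖² + ‖uᵢ‖‖uⱼ‖`, and since `‖uᵢ‖, ‖uⱼ‖ > min(rᵢ, rⱼ) / 2` the overlap
`rᵢ + rⱼ - ‖Zᵢ - Zⱼ‖` is at least `min(rᵢ, rⱼ) / 8`. Two discs overlapping by `2s` contain a common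
disc of radius `s`, which gives the area bound.
-/

open MeasureTheory Metric Set Real RealInnerProductSpace

section InnerProductSpace

variable {E : Type*} [NormedAddCommGroup E] [InnerProductSpace ℝ E]

theorem exists_ne_neg_half_le_inner_of_norm_eq_one {e : Fin 3 → E} (he : ∀ i, ‖e i‖ = 1) :
    ∃ i j, i ≠ j ∧ -1 / 2 ≤ ⟪e i, e j⟫ := by
  by_contra! h
  have hsum : ‖e 0 + e 1 + e 2‖ ^ 2 =
      3 + 2 * (⟪e 0, e 1⟫ + ⟪e 0, e 2⟫ + ⟪e 1, e 2⟫) := by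
    rw [norm_add_sq_real, norm_add_sq_real, inner_add_left, he, he, he]
    ring
  linarith [sq_nonneg ‖e 0 + e 1 + e 2‖, h 0 1 (by decide), h 0 2 (by decide), h 1 2 (by decide)]

theorem exists_ne_neg_half_mul_norm_le_inner (v : Fin 3 → E) :
    ∃ i j, i ≠ j ∧ -(‖v i‖ * ‖v j‖) / 2 ≤ ⟪v i, v j⟫ := by
  by_cases hzero : ∃ i, v i = 0
  · obtain ⟨i, hi⟩ := hzero
    exact ⟨i, i + 1, by fin_cases i <;> decide, by simp [hi]⟩
  push Not at hzero
  obtain ⟨i, j, hij, h⟩ := exists_ne_neg_half_le_inner_of_norm_eq_one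
    (e := fun i ↦ ‖v i‖⁻¹ • v i) fun i ↦ norm_smul_inv_norm (hzero i)
  refine ⟨i, j, hij, ?_⟩
  have hi := norm_pos_iff.2 (hzero i)
  have hj := norm_pos_iff.2 (hzero j)
  simp only [real_inner_smul_left, real_inner_smul_right] at h
  calc -(‖v i‖ * ‖v j‖) / 2 = ‖v i‖ * ‖v j‖ * (-1 / 2) := by ring
    _ ≤ ‖v i‖ * ‖v j‖ * (‖v j‖⁻¹ * (‖v i‖⁻¹ * ⟪v i, v j⟫)) := by gcongr
    _ = ⟪v i, v j⟫ := by field_simp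

theorem norm_sub_le_of_neg_half_mul_norm_le_inner {u v : E} {m : ℝ} (hm : 0 ≤ m)
    (hu : m / 2 ≤ ‖u‖) (hv : m / 2 ≤ ‖v‖) (h : -(‖u‖ * ‖v‖) / 2 ≤ ⟪u, v⟫) :
    ‖u - v‖ ≤ ‖u‖ + ‖v‖ - m / 8 := by
  have hsq : ‖u - v‖ ^ 2 ≤ (‖u‖ + ‖v‖ - m / 8) ^ 2 := by
    rw [norm_sub_sq_real]
    nlinarith [mul_nonneg (sub_nonneg.2 hu) (sub_nonneg.2 hv), mul_nonneg hm (sub_nonneg.2 hu),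
      mul_nonneg hm (sub_nonneg.2 hv)]
  exact (sq_le_sq₀ (norm_nonneg _) (by linarith)).1 hsq

theorem exists_ne_min_div_eight_le_add_sub_dist {Z : Fin 3 → E} {r : Fin 3 → ℝ}
    (h : (⋂ i, ball (Z i) (r i)).Nonempty) :
    ∃ i j, i ≠ j ∧ min (r i) (r j) / 8 ≤ r i + r j - dist (Z i) (Z j) := by
  obtain ⟨x, hx⟩ := h
  have hxZ : ∀ i, ‖Z i - x‖ < r i := fun i ↦ by
    simpa [dist_eq_norm'] using mem_iInter.1 hx i
  have hr : ∀ i, 0 < r i := fun i ↦ (norm_nonneg _).trans_lt (hxZ i)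
  by_cases hnear : ∃ i, ‖Z i - x‖ ≤ r i / 2
  · obtain ⟨i, hi⟩ := hnear
    refine ⟨i, i + 1, by fin_cases i <;> decide, ?_⟩
    have := dist_triangle_right (Z i) (Z (i + 1)) x
    simp only [dist_eq_norm] at this ⊢
    linarith [min_le_left (r i) (r (i + 1)), hxZ (i + 1), hr i]
  push Not at hnear
  obtain ⟨i, j, hij, hinner⟩ := exists_ne_neg_half_mul_norm_le_inner fun i ↦ Z i - x
  refine ⟨i, j, hij, ?_⟩
  have hpos : 0 < min (r i) (r j) := lt_min (hr i) (hr j)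
  have := norm_sub_le_of_neg_half_mul_norm_le_inner hpos.le
    (by linarith [hnear i, min_le_left (r i) (r j)])
    (by linarith [hnear j, min_le_right (r i) (r j)]) hinner
  rw [sub_sub_sub_cancel_right, ← dist_eq_norm] at this
  linarith [hxZ i, hxZ j]

end InnerProductSpace

theorem exists_ball_subset_ball_inter_ball {E : Type*} [SeminormedAddCommGroup E]
    [NormedSpace ℝ E] {x y : E} {r₁ r₂ s : ℝ} (h₁ : s ≤ r₁) (h₂ : s ≤ r₂)
    (h : 2 * s ≤ r₁ + r₂ - dist x y) : ∃ p, ball p s ⊆ ball x r₁ ∩ ball y r₂ := by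
  obtain ⟨p, hxp, hpy⟩ := exists_dist_le_le (sub_nonneg.2 h₁) (sub_nonneg.2 h₂)
    (x := x) (z := y) (by linarith)
  refine ⟨p, subset_inter (ball_subset_ball' ?_) (ball_subset_ball' ?_)⟩
  · rw [dist_comm]; linarith
  · linarith

theorem Complex.ofReal_pi_mul_sq_le_volume_ball_inter_ball {x y : ℂ} {r₁ r₂ s : ℝ}
    (hs : 0 ≤ s) (h₁ : s ≤ r₁) (h₂ : s ≤ r₂) (h : 2 * s ≤ r₁ + r₂ - dist x y) :
    ENNReal.ofReal (π * s ^ 2) ≤ volume (ball x r₁ ∩ ball y r₂) := by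
  obtain ⟨p, hp⟩ := exists_ball_subset_ball_inter_ball h₁ h₂ h
  calc ENNReal.ofReal (π * s ^ 2) = volume (ball p s) := by
        rw [Complex.volume_ball, ENNReal.ofReal_mul pi_pos.le, ENNReal.ofReal_pow hs, mul_comm,
          ← NNReal.coe_real_pi, ENNReal.ofReal_coe_nnreal]
    _ ≤ volume (ball x r₁ ∩ ball y r₂) := measure_mono hp

/-- There is an absolute constant `c > 0` such that whenever three discs
`D(Z i, r i)`, `i = 1,2,3`, have a common point, two of them (with `i ≠ j`) satisfy
`r i + r j − |Z i − Z j| ≥ c min(r i, r j)` and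
`m(D i ∩ D j) ≥ c min(r i, r j)²`. -/
theorem stmt14 :
    ∃ c : ℝ, 0 < c ∧ ∀ (Z : Fin 3 → ℂ) (r : Fin 3 → ℝ), (∀ i, 0 < r i) →
      (⋂ i, ball (Z i) (r i)).Nonempty →
      ∃ i j : Fin 3, i ≠ j ∧
        c * min (r i) (r j) ≤ r i + r j - ‖Z i - Z j‖ ∧
        ENNReal.ofReal (c * min (r i) (r j) ^ 2) ≤
          volume (ball (Z i) (r i) ∩ ball (Z j) (r j)) := by
  refine ⟨1 / 256, by norm_num, fun Z r hr hZ ↦ ?_⟩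
  obtain ⟨i, j, hij, hgap⟩ := exists_ne_min_div_eight_le_add_sub_dist hZ
  have hm : 0 < min (r i) (r j) := lt_min (hr i) (hr j)
  refine ⟨i, j, hij, by rw [← dist_eq_norm]; linarith, ?_⟩
  calc ENNReal.ofReal (1 / 256 * min (r i) (r j) ^ 2)
      ≤ ENNReal.ofReal (π * (min (r i) (r j) / 16) ^ 2) :=
        ENNReal.ofReal_le_ofReal (by nlinarith [pi_gt_three])
    _ ≤ volume (ball (Z i) (r i) ∩ ball (Z j) (r j)) :=
        Complex.ofReal_pi_mul_sq_le_volume_ball_inter_ball (by positivity)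
          (by linarith [min_le_left (r i) (r j)]) (by linarith [min_le_right (r i) (r j)])
          (by linarith)
end

section
/- Define σ_k(x) = (1/k!) ∫_0^x y^k e^{−y} dy and ω_k(x) = e^{−x} Σ_{s=0}^k x^s/s! for x ≥ 0 and integers k ≥ 0. Then: (a) for every t ≥ 0 there exist ε > 0 and k₀ > 0 such that σ_k(k − t√k) ≥ ε for every k ≥ k₀; (b) for every t ≥ 0 there exists ε > 0 such that ω_k(k + t√k) ≥ ε for every k ≥ 0; (c) for every ε > 0 there exists t > 0 such that σ_k(m − t√m) ≤ ε σ_k(m) whenever k ≥ t² and t² ≤ m ≤ k. -/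
/-!
The integrand `g(y) = y^k e^{-y}` is log-concave with its maximum at `y = k`, so it lies below
the exponential tangent to it at any point and it is unimodal. Together with Stirling's upper
bound `k! ≤ e √k (k/e)^k` and `exp (v - v²) ≤ 1 + v` for `v ≥ -1/2`, this gives
`g(k + s√k) / k! ≥ e^{-1-s²} / √k`, so each window of length `√k` at distance `O(√k)` from `k`
carries `σ_k`-mass bounded below: that is (a) and, through `σ_k + ω_k = 1`, (b).
For (c), the tangent bound gives `∫_0^x g ≤ g(x) · x/(k - x)`; at `x = m - t√m` this is at most
`(√m/t) · g(m - √m)`, whereas the window `[m - √m, m]` alone contributes `√m · g(m - √m)`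
to `k! σ_k(m)`.
-/

open MeasureTheory

noncomputable section

/-- `σ_k(x) = (1/k!) ∫_0^x y^k e^{−y} dy`. -/
def sigmaInc (k : ℕ) (x : ℝ) : ℝ :=
  (1 / (Nat.factorial k : ℝ)) * ∫ y in (0 : ℝ)..x, y ^ k * Real.exp (-y)

/-- `ω_k(x) = e^{−x} Σ_{s=0}^k x^s/s!`. -/
def omegaInc (k : ℕ) (x : ℝ) : ℝ :=
  Real.exp (-x) * ∑ s ∈ Finset.range (k + 1), x ^ s / (Nat.factorial s : ℝ)

open Real Set

lemma exp_sub_sq_le_one_add {v : ℝ} (hv : -(1 / 2) ≤ v) : exp (v - v ^ 2) ≤ 1 + v := by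
  rcases le_total 0 v with hv0 | hv0
  · have hpos : 0 < 1 + v := by linarith
    rw [← le_log_iff_exp_le hpos]
    calc v - v ^ 2 ≤ v / (1 + v) := by rw [le_div_iff₀ hpos]; nlinarith [pow_nonneg hv0 3]
      _ = 1 - (1 + v)⁻¹ := by field_simp; ring
      _ ≤ log (1 + v) := one_sub_inv_le_log_of_pos hpos
  · have hquad := quadratic_le_exp_of_nonneg (by nlinarith : 0 ≤ v ^ 2 - v)
    have hprod : exp (v - v ^ 2) * exp (v ^ 2 - v) = 1 := by rw [← exp_add]; simp
    nlinarith [exp_pos (v - v ^ 2), mul_le_mul_of_nonneg_left hquad (exp_pos (v - v ^ 2)).le]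

/-- Stirling's sequence `n! / (√(2n) (n/e)^n)` decreases from its value `e / √2` at `n = 1`. -/
lemma factorial_le_exp_one_mul_sqrt_mul_pow (n : ℕ) (hn : n ≠ 0) :
    (n.factorial : ℝ) ≤ exp 1 * √n * (n / exp 1) ^ n := by
  obtain ⟨m, rfl⟩ := Nat.exists_eq_succ_of_ne_zero hn
  have h : Stirling.stirlingSeq (m + 1) ≤ Stirling.stirlingSeq 1 :=
    Stirling.stirlingSeq'_antitone (Nat.zero_le m)
  rw [Stirling.stirlingSeq_one, Stirling.stirlingSeq, div_le_iff₀ (by positivity)] at h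
  calc _ ≤ _ := h
    _ = _ := by rw [sqrt_mul zero_le_two]; field_simp

/-- The tangent line at `x` of the concave function `log (y^k e^{-y}) = k log y - y`. -/
lemma pow_mul_exp_neg_le_mul_exp (k : ℕ) {x y : ℝ} (hx : 0 < x) (hy : 0 ≤ y) :
    y ^ k * exp (-y) ≤ x ^ k * exp (-x) * exp ((k - x) / x * (y - x)) := by
  have hpow : (y / x) ^ k ≤ exp (k * (y / x - 1)) := by
    rw [exp_nat_mul]
    exact pow_le_pow_left₀ (by positivity) (by linarith [add_one_le_exp (y / x - 1)]) k
  calc y ^ k * exp (-y) = x ^ k * (y / x) ^ k * exp (-y) := by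
        rw [div_pow, mul_div_cancel₀ _ (pow_ne_zero k hx.ne')]
    _ ≤ x ^ k * exp (k * (y / x - 1)) * exp (-y) := by gcongr
    _ = x ^ k * exp (-x) * exp ((k - x) / x * (y - x)) := by
        rw [mul_assoc, mul_assoc, ← exp_add, ← exp_add]
        congr 2
        field_simp
        ring

lemma pow_mul_exp_neg_le_of_tangent_nonpos (k : ℕ) {x y : ℝ} (hx : 0 < x) (hy : 0 ≤ y)
    (h : (k - x) * (y - x) ≤ 0) : y ^ k * exp (-y) ≤ x ^ k * exp (-x) := by
  calc y ^ k * exp (-y) ≤ x ^ k * exp (-x) * exp ((k - x) / x * (y - x)) :=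
        pow_mul_exp_neg_le_mul_exp k hx hy
    _ ≤ x ^ k * exp (-x) * 1 := by
        gcongr
        rw [exp_le_one_iff, div_mul_eq_mul_div]
        exact div_nonpos_of_nonpos_of_nonneg h hx.le
    _ = x ^ k * exp (-x) := mul_one _

lemma monotoneOn_pow_mul_exp_neg (k : ℕ) :
    MonotoneOn (fun y : ℝ ↦ y ^ k * exp (-y)) (Icc 0 k) := by
  intro y hy x hx hyx
  rcases hyx.eq_or_lt with rfl | hlt
  · rfl
  exact pow_mul_exp_neg_le_of_tangent_nonpos k (hy.1.trans_lt hlt) hy.1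
    (mul_nonpos_of_nonneg_of_nonpos (by linarith [hx.2]) (by linarith))

lemma antitoneOn_pow_mul_exp_neg (k : ℕ) :
    AntitoneOn (fun y : ℝ ↦ y ^ k * exp (-y)) (Ici k) := by
  intro x hx y hy hxy
  rcases Nat.eq_zero_or_pos k with rfl | hk
  · simpa using hxy
  exact pow_mul_exp_neg_le_of_tangent_nonpos k ((Nat.cast_pos.2 hk).trans_le hx)
    (by linarith [mem_Ici.1 hx])
    (mul_nonpos_of_nonpos_of_nonneg (by linarith [mem_Ici.1 hx]) (by linarith))

lemma min_le_pow_mul_exp_neg (k : ℕ) {c d y : ℝ} (hc : 0 ≤ c) (hy : y ∈ Icc c d) :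
    min (c ^ k * exp (-c)) (d ^ k * exp (-d)) ≤ y ^ k * exp (-y) := by
  rcases le_total y k with hyk | hky
  · exact (min_le_left _ _).trans
      (monotoneOn_pow_mul_exp_neg k ⟨hc, hy.1.trans hyk⟩ ⟨hc.trans hy.1, hyk⟩ hy.1)
  · exact (min_le_right _ _).trans
      (antitoneOn_pow_mul_exp_neg k hky (hky.trans hy.2) hy.2)

lemma pow_mul_exp_neg_mul_exp_neg_sq_le (k : ℕ) {s : ℝ} (hs : -(√k / 2) ≤ s) :
    (k : ℝ) ^ k * exp (-k) * exp (-s ^ 2) ≤ (k + s * √k) ^ k * exp (-(k + s * √k)) := by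
  rcases Nat.eq_zero_or_pos k with rfl | hk
  · simp [sq_nonneg]
  have hr : 0 < √(k : ℝ) := sqrt_pos.2 (by exact_mod_cast hk)
  have hr2 : √(k : ℝ) ^ 2 = k := sq_sqrt (Nat.cast_nonneg k)
  have hv : -(1 / 2) ≤ s / √k := by rw [le_div_iff₀ hr]; linarith
  have hsplit : (k : ℝ) + s * √k = k * (1 + s / √k) := by
    rw [mul_add, mul_one, mul_div_left_comm, div_sqrt]
  calc (k : ℝ) ^ k * exp (-k) * exp (-s ^ 2)
      = k ^ k * exp (s / √k - (s / √k) ^ 2) ^ k * exp (-(k + s * √k)) := by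
        rw [← exp_nat_mul, mul_assoc, mul_assoc, ← exp_add, ← exp_add]
        congr 2
        field_simp
        rw [hr2]
        ring
    _ ≤ k ^ k * (1 + s / √k) ^ k * exp (-(k + s * √k)) := by
        gcongr
        exact exp_sub_sq_le_one_add hv
    _ = (k + s * √k) ^ k * exp (-(k + s * √k)) := by rw [hsplit, mul_pow]

lemma sigmaInc_sub_sigmaInc (k : ℕ) (c d : ℝ) :
    sigmaInc k d - sigmaInc k c = (∫ y in c..d, y ^ k * exp (-y)) / k.factorial := by
  have hint (a b : ℝ) : IntervalIntegrable (fun y : ℝ ↦ y ^ k * exp (-y)) volume a b :=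
    (by fun_prop : Continuous fun y : ℝ ↦ y ^ k * exp (-y)).intervalIntegrable a b
  rw [sigmaInc, sigmaInc, ← intervalIntegral.integral_interval_sub_left (hint 0 d) (hint 0 c)]
  ring

lemma sub_mul_div_factorial_le_sigmaInc_sub (k : ℕ) {c d m : ℝ} (hcd : c ≤ d)
    (hm : ∀ y ∈ Icc c d, m ≤ y ^ k * exp (-y)) :
    (d - c) * m / k.factorial ≤ sigmaInc k d - sigmaInc k c := by
  rw [sigmaInc_sub_sigmaInc]
  gcongr
  simpa using intervalIntegral.integral_mono_on hcd (intervalIntegrable_const (μ := volume))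
    ((by fun_prop : Continuous fun y : ℝ ↦ y ^ k * exp (-y)).intervalIntegrable c d) hm

lemma sigmaInc_nonneg (k : ℕ) {x : ℝ} (hx : 0 ≤ x) : 0 ≤ sigmaInc k x :=
  mul_nonneg (by positivity)
    (intervalIntegral.integral_nonneg hx fun y hy ↦ mul_nonneg (pow_nonneg hy.1 k) (exp_pos _).le)

lemma omegaInc_nonneg (k : ℕ) {x : ℝ} (hx : 0 ≤ x) : 0 ≤ omegaInc k x :=
  mul_nonneg (exp_pos _).le (Finset.sum_nonneg fun _ _ ↦ by positivity)

lemma sigmaInc_succ (k : ℕ) (x : ℝ) :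
    sigmaInc (k + 1) x = sigmaInc k x - x ^ (k + 1) * exp (-x) / (k + 1).factorial := by
  have hibp := intervalIntegral.integral_mul_deriv_eq_deriv_mul (a := 0) (b := x)
    (u := fun y ↦ y ^ (k + 1)) (v := fun y ↦ -exp (-y))
    (fun y _ ↦ by simpa using hasDerivAt_pow (k + 1) y)
    (fun y _ ↦ by simpa using ((hasDerivAt_neg y).exp).fun_neg)
    (by apply Continuous.intervalIntegrable; fun_prop)
    (by apply Continuous.intervalIntegrable; fun_prop)
  have hint : ∫ y in 0..x, y ^ (k + 1) * exp (-y) =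
      (k + 1) * (∫ y in 0..x, y ^ k * exp (-y)) - x ^ (k + 1) * exp (-x) := by
    simp only [mul_neg, intervalIntegral.integral_neg, sub_neg_eq_add] at hibp
    rw [hibp, zero_pow k.succ_ne_zero, zero_mul, add_zero]
    simp only [mul_assoc, intervalIntegral.integral_const_mul]
    ring
  rw [sigmaInc, sigmaInc, hint, Nat.factorial_succ]
  push_cast
  field_simp

lemma sigmaInc_add_omegaInc (k : ℕ) (x : ℝ) : sigmaInc k x + omegaInc k x = 1 := by
  induction k with
  | zero =>
    have h := intervalIntegral.integral_comp_neg (a := 0) (b := x) exp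
    simp only [neg_zero, integral_exp, exp_zero] at h
    simp [sigmaInc, omegaInc, h]
  | succ k ih =>
    rw [sigmaInc_succ, omegaInc, Finset.sum_range_succ, mul_add, ← omegaInc, ← ih]
    ring

lemma integral_pow_mul_exp_neg_le (k : ℕ) {x : ℝ} (hx : 0 < x) (hxk : x < k) :
    ∫ y in 0..x, y ^ k * exp (-y) ≤ x ^ k * exp (-x) * (x / (k - x)) := by
  set lam := ((k : ℝ) - x) / x with hlam
  have hlam0 : 0 < lam := div_pos (by linarith) hx
  have hexp : ∫ y in 0..x, exp (lam * y - lam * x) = (1 - exp (-(lam * x))) / lam := by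
    rw [intervalIntegral.integral_comp_mul_sub (fun y ↦ exp y) hlam0.ne', integral_exp]
    simp only [mul_zero, zero_sub, sub_self, exp_zero, smul_eq_mul]
    ring
  calc ∫ y in 0..x, y ^ k * exp (-y)
      ≤ ∫ y in 0..x, x ^ k * exp (-x) * exp (lam * y - lam * x) := by
        refine intervalIntegral.integral_mono_on hx.le
          (by apply Continuous.intervalIntegrable; fun_prop)
          (by apply Continuous.intervalIntegrable; fun_prop) fun y hy ↦ ?_
        rw [← mul_sub]
        exact pow_mul_exp_neg_le_mul_exp k hx hy.1
    _ = x ^ k * exp (-x) * ((1 - exp (-(lam * x))) / lam) := by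
        rw [intervalIntegral.integral_const_mul, hexp]
    _ ≤ x ^ k * exp (-x) * (1 / lam) := by
        gcongr
        linarith [exp_pos (-(lam * x))]
    _ = x ^ k * exp (-x) * (x / (k - x)) := by rw [hlam, one_div_div]

lemma sub_mul_exp_le_sigmaInc_sub (k : ℕ) (hk : k ≠ 0) {s₁ s₂ A : ℝ} (hs₁ : -(√k / 2) ≤ s₁)
    (hs : s₁ ≤ s₂) (hA₁ : s₁ ^ 2 ≤ A) (hA₂ : s₂ ^ 2 ≤ A) :
    (s₂ - s₁) * exp (-1 - A) ≤ sigmaInc k (k + s₂ * √k) - sigmaInc k (k + s₁ * √k) := by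
  set m := (k : ℝ) ^ k * exp (-k) * exp (-A)
  have hend {s : ℝ} (hs : -(√k / 2) ≤ s) (hA : s ^ 2 ≤ A) :
      m ≤ (k + s * √k) ^ k * exp (-(k + s * √k)) :=
    le_trans (mul_le_mul_of_nonneg_left (exp_le_exp.2 (neg_le_neg hA)) (by positivity))
      (pow_mul_exp_neg_mul_exp_neg_sq_le k hs)
  have hc : 0 ≤ (k : ℝ) + s₁ * √k := by
    nlinarith [sqrt_nonneg (k : ℝ), sq_sqrt (Nat.cast_nonneg (α := ℝ) k)]
  have hstirling : (k.factorial : ℝ) * exp (-1) ≤ √k * ((k : ℝ) ^ k * exp (-k)) := by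
    have h := factorial_le_exp_one_mul_sqrt_mul_pow k hk
    rw [div_pow, ← exp_nat_mul, mul_one, div_eq_mul_inv, ← exp_neg] at h
    calc _ ≤ exp 1 * √k * ((k : ℝ) ^ k * exp (-k)) * exp (-1) := by gcongr
      _ = _ := by
        have h1 : exp 1 * exp (-1) = 1 := by rw [← exp_add]; simp
        linear_combination (√k * ((k : ℝ) ^ k * exp (-k))) * h1
  calc (s₂ - s₁) * exp (-1 - A)
      ≤ (k + s₂ * √k - (k + s₁ * √k)) * m / k.factorial := by
        rw [le_div_iff₀ (by positivity), sub_eq_add_neg (-1), exp_add]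
        calc (s₂ - s₁) * (exp (-1) * exp (-A)) * k.factorial
            = (s₂ - s₁) * exp (-A) * (k.factorial * exp (-1)) := by ring
          _ ≤ (s₂ - s₁) * exp (-A) * (√k * ((k : ℝ) ^ k * exp (-k))) := by
            gcongr
          _ = _ := by ring
    _ ≤ _ := sub_mul_div_factorial_le_sigmaInc_sub k (by nlinarith [sqrt_nonneg (k : ℝ)])
        fun y hy ↦ (le_min (hend hs₁ hA₁) (hend (hs₁.trans hs) hA₂)).trans
          (min_le_pow_mul_exp_neg k hc hy)

theorem exists_pos_le_sigmaInc_sub_mul_sqrt {t : ℝ} (ht : 0 ≤ t) :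
    ∃ ε : ℝ, 0 < ε ∧ ∃ k₀ : ℕ, 0 < k₀ ∧ ∀ k : ℕ, k₀ ≤ k → ε ≤ sigmaInc k (k - t * √k) := by
  refine ⟨exp (-1 - (t + 1) ^ 2), exp_pos _, ⌈4 * (t + 1) ^ 2⌉₊, Nat.ceil_pos.2 (by positivity),
    fun k hk ↦ ?_⟩
  have hk' : (2 * (t + 1)) ^ 2 ≤ k := by linarith [Nat.ceil_le.1 hk]
  have hk0 : k ≠ 0 := by rintro rfl; norm_num at hk'; nlinarith
  have hsqrt : 2 * (t + 1) ≤ √k := le_sqrt_of_sq_le hk'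
  have hwindow := sub_mul_exp_le_sigmaInc_sub k hk0 (s₁ := -(t + 1)) (s₂ := -t)
    (A := (t + 1) ^ 2) (by linarith) (by linarith) (by nlinarith) (by nlinarith)
  have hleft := sigmaInc_nonneg k (x := k + -(t + 1) * √k)
    (by nlinarith [sq_sqrt (Nat.cast_nonneg (α := ℝ) k)])
  rw [neg_mul, ← sub_eq_add_neg] at hwindow
  linarith

theorem exists_pos_le_omegaInc_add_mul_sqrt {t : ℝ} (ht : 0 ≤ t) :
    ∃ ε : ℝ, 0 < ε ∧ ∀ k : ℕ, ε ≤ omegaInc k (k + t * √k) := by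
  refine ⟨exp (-1 - (t + 1) ^ 2), exp_pos _, fun k ↦ ?_⟩
  rcases eq_or_ne k 0 with rfl | hk
  · simpa [omegaInc] using neg_one_lt_zero.le.trans (sq_nonneg (t + 1))
  have hwindow := sub_mul_exp_le_sigmaInc_sub k hk (s₁ := t) (s₂ := t + 1) (A := (t + 1) ^ 2)
    (by linarith [sqrt_nonneg (k : ℝ)]) (by linarith) (by nlinarith) le_rfl
  have h₁ := sigmaInc_add_omegaInc k (k + t * √k)
  have h₂ := sigmaInc_add_omegaInc k (k + (t + 1) * √k)
  have h₂_nonneg := omegaInc_nonneg k (x := k + (t + 1) * √k) (by positivity)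
  linarith

theorem exists_sigmaInc_sub_mul_sqrt_le {ε : ℝ} (hε : 0 < ε) :
    ∃ t : ℝ, 0 < t ∧ ∀ (k : ℕ) (m : ℝ), t ^ 2 ≤ m → m ≤ k →
      sigmaInc k (m - t * √m) ≤ ε * sigmaInc k m := by
  set t := max 1 ε⁻¹
  have ht1 : 1 ≤ t := le_max_left _ _
  have htε : t⁻¹ ≤ ε := inv_le_of_inv_le₀ hε (le_max_right _ _)
  refine ⟨t, by linarith, fun k m htm hmk ↦ ?_⟩
  set u := √m
  have hu2 : u ^ 2 = m := sq_sqrt (by nlinarith)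
  have htu : t ≤ u := le_sqrt_of_sq_le htm
  have hmu : 0 ≤ m - u := by nlinarith
  have hxmu : m - t * u ≤ m - u := by nlinarith
  have hσm := sigmaInc_nonneg k (x := m) (by nlinarith)
  have hσmu := sigmaInc_nonneg k hmu
  rcases (by nlinarith : 0 ≤ m - t * u).eq_or_lt with hx | hx
  · rw [← hx, sigmaInc, intervalIntegral.integral_same, mul_zero]
    positivity
  have hxk : m - t * u < k := by nlinarith
  have hg : (m - t * u) ^ k * exp (-(m - t * u)) ≤ (m - u) ^ k * exp (-(m - u)) :=
    monotoneOn_pow_mul_exp_neg k ⟨hx.le, hxk.le⟩ ⟨hmu, by linarith⟩ hxmu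
  have hratio : (m - t * u) / (k - (m - t * u)) ≤ u / t := by
    rw [div_le_div_iff₀ (by linarith) (by linarith)]
    nlinarith
  calc sigmaInc k (m - t * u)
      = (∫ y in 0..m - t * u, y ^ k * exp (-y)) / k.factorial := one_div_mul_eq_div _ _
    _ ≤ (m - t * u) ^ k * exp (-(m - t * u)) * ((m - t * u) / (k - (m - t * u))) /
          k.factorial := by
        gcongr
        exact integral_pow_mul_exp_neg_le k hx hxk
    _ ≤ (m - u) ^ k * exp (-(m - u)) * (u / t) / k.factorial := by
        gcongr ?_ / _
        exact mul_le_mul hg hratio (by positivity) (by positivity)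
    _ = t⁻¹ * ((m - (m - u)) * ((m - u) ^ k * exp (-(m - u))) / k.factorial) := by
        field_simp
        ring
    _ ≤ t⁻¹ * (sigmaInc k m - sigmaInc k (m - u)) := by
        gcongr
        exact sub_mul_div_factorial_le_sigmaInc_sub k (by linarith) fun y hy ↦
          monotoneOn_pow_mul_exp_neg k ⟨hmu, by linarith [hy.1]⟩
            ⟨hmu.trans hy.1, hy.2.trans hmk⟩ hy.1
    _ ≤ t⁻¹ * sigmaInc k m := by gcongr; linarith
    _ ≤ ε * sigmaInc k m := by gcongr

/-- Estimates on the incomplete gamma function: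
(a) for every `t ≥ 0` there are `ε > 0`, `k₀` with `σ_k(k − t√k) ≥ ε` for `k ≥ k₀`;
(b) for every `t ≥ 0` there is `ε > 0` with `ω_k(k + t√k) ≥ ε` for all `k`;
(c) for every `ε > 0` there is `t > 0` such that `σ_k(m − t√m) ≤ ε σ_k(m)`
whenever `t² ≤ m ≤ k`. -/
theorem stmt16 :
    (∀ t : ℝ, 0 ≤ t → ∃ ε : ℝ, 0 < ε ∧ ∃ k₀ : ℕ, 0 < k₀ ∧ ∀ k : ℕ, k₀ ≤ k →
      ε ≤ sigmaInc k ((k : ℝ) - t * Real.sqrt k)) ∧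
    (∀ t : ℝ, 0 ≤ t → ∃ ε : ℝ, 0 < ε ∧ ∀ k : ℕ,
      ε ≤ omegaInc k ((k : ℝ) + t * Real.sqrt k)) ∧
    (∀ ε : ℝ, 0 < ε → ∃ t : ℝ, 0 < t ∧ ∀ (k : ℕ) (m : ℝ),
      t ^ 2 ≤ (k : ℝ) → t ^ 2 ≤ m → m ≤ (k : ℝ) →
      sigmaInc k (m - t * Real.sqrt m) ≤ ε * sigmaInc k m) := by
  refine ⟨fun t ht ↦ exists_pos_le_sigmaInc_sub_mul_sqrt ht,
    fun t ht ↦ exists_pos_le_omegaInc_add_mul_sqrt ht, fun ε hε ↦ ?_⟩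
  obtain ⟨t, ht, h⟩ := exists_sigmaInc_sub_mul_sqrt_le hε
  exact ⟨t, ht, fun k m _ htm hmk ↦ h k m htm hmk⟩

end
end

section
/- Let δ > 0, let m ≥ 1 be an integer, and set R = √m + δ. If f is a function analytic on the disc D(R) and continuous up to its boundary, satisfying f(0) = f'(0) = ... = f^{(m−1)}(0) = 0 and |f(R e^{it})| ≤ e^{R²/2} for all t ∈ [0, 2π], then |f(z)| ≤ e^{δ²} e^{|z|²/2} for all |z| ≤ R. -/
/-!
Write `f = z ^ m • g`, where `g` is the `m`-fold iterated `dslope` of `f` at `0`; it is again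
holomorphic on `D(R)` and continuous up to the boundary, so the maximum principle gives
`|f z| ≤ e^{R²/2} (|z| / R) ^ m`. As `r ↦ r ^ m e^{-r²/2}` peaks at `r = √m`, it remains to see
`√m ^ m e^{-m/2} ≤ e^{δ²} R ^ m e^{-R²/2}`; with `x = δ / √m` this is
`m (x - x² / 2) ≤ m log (1 + x)`.
-/

open Metric Function Topology

lemma AnalyticAt.iterate_dslope_apply_self {𝕜 : Type*} [NontriviallyNormedField 𝕜]
    [CompleteSpace 𝕜] [CharZero 𝕜] {f : 𝕜 → 𝕜} {a : 𝕜} (hf : AnalyticAt 𝕜 f a) (k : ℕ) :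
    (swap dslope a)^[k] f a = iteratedDeriv k f a / k.factorial := by
  rw [← (hf.hasFPowerSeriesAt.has_fpower_series_iterate_dslope_fslope k).coeff_zero 1,
    ← FormalMultilinearSeries.coeff, FormalMultilinearSeries.coeff_iterate_fslope, zero_add,
    FormalMultilinearSeries.coeff_ofScalars]

section DSlope

variable {E : Type*} [NormedAddCommGroup E] [NormedSpace ℂ E] [CompleteSpace E] {f : ℂ → E}
  {s : Set ℂ} {c : ℂ}

lemma DiffContOnCl.dslope (hf : DiffContOnCl ℂ f s) (hs : s ∈ 𝓝 c) :
    DiffContOnCl ℂ (dslope f c) s := by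
  refine ⟨(Complex.differentiableOn_dslope hs).2 hf.differentiableOn, fun x hx => ?_⟩
  rcases eq_or_ne x c with rfl | hxc
  · exact (continuousAt_dslope_same.2 (hf.differentiableAt' hs)).continuousWithinAt
  · exact (continuousWithinAt_dslope_of_ne hxc).2 (hf.continuousOn x hx)

lemma DiffContOnCl.iterate_dslope (hf : DiffContOnCl ℂ f s) (hs : s ∈ 𝓝 c) (k : ℕ) :
    DiffContOnCl ℂ ((swap _root_.dslope c)^[k] f) s := by
  induction k with
  | zero => exact hf
  | succ k ih => rw [iterate_succ_apply']; exact ih.dslope hs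

end DSlope

theorem Complex.norm_le_mul_div_pow_of_iteratedDeriv_eq_zero {f : ℂ → ℂ} {R M : ℝ} {m : ℕ}
    (hR : 0 < R) (hf : DiffContOnCl ℂ f (ball 0 R))
    (hvan : ∀ k < m, iteratedDeriv k f 0 = 0) (hbd : ∀ z, ‖z‖ = R → ‖f z‖ ≤ M)
    {z : ℂ} (hz : ‖z‖ ≤ R) : ‖f z‖ ≤ M * (‖z‖ / R) ^ m := by
  set g := (swap dslope 0)^[m] f
  have hfg : ∀ w, f w = w ^ m * g w := fun w => by
    refine (pow_sub_smul_iterate_dslope_of_zero (a := 0) m (fun k hk => ?_) w).symm.trans ?_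
    · rw [(hf.differentiableOn.analyticAt (ball_mem_nhds 0 hR)).iterate_dslope_apply_self,
        hvan k hk, zero_div]
    · rw [sub_zero, smul_eq_mul]
  have hg : ‖g z‖ ≤ M / R ^ m := by
    refine Complex.norm_le_of_forall_mem_frontier_norm_le isBounded_ball
      (hf.iterate_dslope (ball_mem_nhds 0 hR) m) (fun w hw => ?_) ?_
    · rw [frontier_ball 0 hR.ne', mem_sphere_zero_iff_norm] at hw
      rw [le_div_iff₀ (by positivity), mul_comm, ← hw, ← norm_pow, ← norm_mul, ← hfg]
      exact hbd w hw
    · rwa [closure_ball 0 hR.ne', mem_closedBall_zero_iff]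
  calc ‖f z‖ = ‖z‖ ^ m * ‖g z‖ := by rw [hfg, norm_mul, norm_pow]
    _ ≤ ‖z‖ ^ m * (M / R ^ m) := by gcongr
    _ = M * (‖z‖ / R) ^ m := by ring

namespace Real

lemma le_exp_sq_sub_one_div_two (y : ℝ) : y ≤ exp ((y ^ 2 - 1) / 2) := by
  have h : y ^ 2 ≤ exp ((y ^ 2 - 1) / 2) ^ 2 := by
    rw [← exp_nat_mul, Nat.cast_ofNat, mul_div_cancel₀ _ two_ne_zero]
    linarith [add_one_le_exp (y ^ 2 - 1)]
  exact (abs_le_of_sq_le_sq' h (exp_pos _).le).2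

lemma pow_le_sqrt_pow_mul_exp {n : ℕ} (hn : 0 < n) {r : ℝ} (hr : 0 ≤ r) :
    r ^ n ≤ √n ^ n * exp ((r ^ 2 - n) / 2) := by
  have hs : 0 < √(n : ℝ) := sqrt_pos.2 (Nat.cast_pos.2 hn)
  have hy := pow_le_pow_left₀ (div_nonneg hr hs.le) (le_exp_sq_sub_one_div_two (r / √n)) n
  have hexp : (n : ℝ) * (((r / √n) ^ 2 - 1) / 2) = (r ^ 2 - n) / 2 := by
    rw [div_pow, sq_sqrt (Nat.cast_nonneg n)]
    field_simp
  rwa [← exp_nat_mul, hexp, div_pow, div_le_iff₀ (by positivity), mul_comm] at hy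

lemma sub_sq_div_two_le_log_one_add {x : ℝ} (hx : 0 ≤ x) : x - x ^ 2 / 2 ≤ log (1 + x) := by
  refine le_trans ?_ (le_log_one_add_of_nonneg hx)
  rw [le_div_iff₀ (by positivity)]
  nlinarith [pow_nonneg hx 3]

lemma exp_sub_sq_div_two_le_one_add {x : ℝ} (hx : 0 ≤ x) : exp (x - x ^ 2 / 2) ≤ 1 + x :=
  (le_log_iff_exp_le (by positivity)).1 (sub_sq_div_two_le_log_one_add hx)

lemma sqrt_pow_mul_exp_le_pow {n : ℕ} (hn : 0 < n) {δ : ℝ} (hδ : 0 ≤ δ) :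
    √n ^ n * exp (√n * δ - δ ^ 2 / 2) ≤ (√n + δ) ^ n := by
  have hs : 0 < √(n : ℝ) := sqrt_pos.2 (Nat.cast_pos.2 hn)
  have hx := pow_le_pow_left₀ (exp_pos _).le
    (exp_sub_sq_div_two_le_one_add (div_nonneg hδ hs.le)) n
  have hexp : (n : ℝ) * (δ / √n - (δ / √n) ^ 2 / 2) = √n * δ - δ ^ 2 / 2 := by
    rw [div_pow, sq_sqrt (Nat.cast_nonneg n)]
    field_simp
    linear_combination (-2 * δ) * mul_self_sqrt (Nat.cast_nonneg (α := ℝ) n)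
  have hbase : (1 + δ / √n) ^ n = (√n + δ) ^ n / √n ^ n := by
    rw [← div_pow, add_div, div_self hs.ne']
  rwa [← exp_nat_mul, hexp, hbase, le_div_iff₀ (by positivity), mul_comm] at hx

lemma exp_sq_div_two_mul_div_pow_le {n : ℕ} (hn : 0 < n) {δ r : ℝ} (hδ : 0 ≤ δ) (hr : 0 ≤ r) :
    exp ((√n + δ) ^ 2 / 2) * (r / (√n + δ)) ^ n ≤ exp (δ ^ 2) * exp (r ^ 2 / 2) := by
  have hR : 0 < √(n : ℝ) + δ := by positivity
  have hexp : (√n + δ) ^ 2 / 2 + (r ^ 2 - n) / 2 =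
      (√n * δ - δ ^ 2 / 2) + (δ ^ 2 + r ^ 2 / 2) := by
    linear_combination mul_self_sqrt (Nat.cast_nonneg (α := ℝ) n) / 2
  rw [div_pow, mul_div_assoc', div_le_iff₀ (by positivity)]
  calc exp ((√n + δ) ^ 2 / 2) * r ^ n
      ≤ exp ((√n + δ) ^ 2 / 2) * (√n ^ n * exp ((r ^ 2 - n) / 2)) := by
        gcongr; exact pow_le_sqrt_pow_mul_exp hn hr
    _ = √n ^ n * exp (√n * δ - δ ^ 2 / 2) * exp (δ ^ 2 + r ^ 2 / 2) := by
        rw [mul_left_comm, ← exp_add, hexp, exp_add, mul_assoc]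
    _ ≤ (√n + δ) ^ n * exp (δ ^ 2 + r ^ 2 / 2) := by
        gcongr; exact sqrt_pow_mul_exp_le_pow hn hδ
    _ = exp (δ ^ 2) * exp (r ^ 2 / 2) * (√n + δ) ^ n := by rw [exp_add, mul_comm]

end Real

/-- Let `δ > 0`, `m ≥ 1`, `R = √m + δ`. If `f` is analytic on `D(R)`, continuous up to
the boundary, vanishes at `0` to order at least `m`, and `|f| ≤ e^{R²/2}` on the circle
`|z| = R`, then `|f(z)| ≤ e^{δ²} e^{|z|²/2}` for all `|z| ≤ R`. -/
theorem stmt19 (δ : ℝ) (hδ : 0 < δ) (m : ℕ) (hm : 1 ≤ m) (R : ℝ)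
    (hR : R = Real.sqrt m + δ) (f : ℂ → ℂ)
    (hanal : DifferentiableOn ℂ f (ball (0 : ℂ) R))
    (hcont : ContinuousOn f (closedBall (0 : ℂ) R))
    (hvan : ∀ k < m, iteratedDeriv k f 0 = 0)
    (hbd : ∀ z : ℂ, ‖z‖ = R → ‖f z‖ ≤ Real.exp (R ^ 2 / 2)) :
    ∀ z : ℂ, ‖z‖ ≤ R →
      ‖f z‖ ≤ Real.exp (δ ^ 2) * Real.exp (‖z‖ ^ 2 / 2) := by
  intro z hz
  have hR₀ : 0 < R := hR ▸ by positivity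
  have hf : DiffContOnCl ℂ f (ball 0 R) := ⟨hanal, by rwa [closure_ball 0 hR₀.ne']⟩
  calc ‖f z‖ ≤ Real.exp (R ^ 2 / 2) * (‖z‖ / R) ^ m :=
        Complex.norm_le_mul_div_pow_of_iteratedDeriv_eq_zero hR₀ hf hvan hbd hz
    _ ≤ Real.exp (δ ^ 2) * Real.exp (‖z‖ ^ 2 / 2) :=
        hR ▸ Real.exp_sq_div_two_mul_div_pow_le hm hδ.le (norm_nonneg z)
end
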